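/- Let S and J be hermitian involutions on a finite-dimensional complex inner product space, and let z be an eigenvector of SJ with eigenvalue λ satisfying |λ| = 1 and λ ≠ ±1. Then z and Jz are orthogonal, and the vectors Jz + λz and Jz − λz are nonzero eigenvectors of S with eigenvalues +1 and −1, respectively. -/

import Mathlib

open scoped InnerProductSpace ComplexConjugate

/-!
Applying `S` to `S (J z) = λ z` gives `J z = λ S z`, so `S z = λ̄ J z` because `|λ| = 1`. Since
`S` is a self-adjoint involution it preserves inner products, hence
`⟪z, J z⟫ = ⟪S z, S J z⟫ = ⟪λ̄ J z, λ z⟫ = λ² ⟪z, J z⟫`, and `λ² ≠ 1` forces orthogonality.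
The eigenvector equations for `J z ± λ z` are direct computations with `S z = λ̄ J z`, and
`J z ± λ z = 0` would make `z` an eigenvector of the involution `J` with eigenvalue `∓λ`,
whose square is not `1`.
-/

namespace LinearMap

section Module

variable {R M : Type*} [CommRing R] [AddCommGroup M] [Module R M] {S J : M →ₗ[R] M} {z : M}
  {c d : R}

theorem sq_eq_one_of_apply_eq_smul [IsDomain R] [Module.IsTorsionFree R M] (hJ2 : J ∘ₗ J = id)
    (hz : z ≠ 0) (h : J z = c • z) : c ^ 2 = 1 := by
  have hJJ : J (J z) = z := LinearMap.congr_fun hJ2 z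
  rw [h, map_smul, h, smul_smul, ← sq] at hJJ
  have : (c ^ 2 - 1) • z = 0 := by rw [sub_smul, one_smul, hJJ, sub_self]
  exact sub_eq_zero.mp ((smul_eq_zero.mp this).resolve_right hz)

theorem apply_eq_smul_of_apply_apply_eq_smul (hS2 : S ∘ₗ S = id) (heig : S (J z) = c • z)
    (hdc : d * c = 1) : S z = d • J z := by
  have hJz : J z = c • S z :=
    calc J z = S (S (J z)) := (LinearMap.congr_fun hS2 (J z)).symm
      _ = c • S z := by rw [heig, map_smul]
  rw [hJz, smul_smul, hdc, one_smul]

theorem apply_add_smul_eq_self (heig : S (J z) = c • z) (hSz : S z = d • J z)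
    (hdc : d * c = 1) : S (J z + c • z) = J z + c • z := by
  rw [map_add, map_smul, heig, hSz, smul_smul, mul_comm, hdc, one_smul, add_comm]

theorem apply_sub_smul_eq_neg (heig : S (J z) = c • z) (hSz : S z = d • J z) (hdc : d * c = 1) :
    S (J z - c • z) = -(J z - c • z) := by
  rw [map_sub, map_smul, heig, hSz, smul_smul, mul_comm, hdc, one_smul, neg_sub]

end Module

section InnerProduct

variable {𝕜 E : Type*} [RCLike 𝕜] [NormedAddCommGroup E] [InnerProductSpace 𝕜 E]
  {S J : E →ₗ[𝕜] E}

theorem IsSymmetric.inner_map_map_of_comp_self_eq_id (hS : S.IsSymmetric) (hS2 : S ∘ₗ S = id)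
    (x y : E) : ⟪S x, S y⟫_𝕜 = ⟪x, y⟫_𝕜 := by
  rw [hS, ← comp_apply, hS2, id_apply]

theorem inner_apply_eq_zero_of_apply_apply_eq_smul (hS : S.IsSymmetric) (hS2 : S ∘ₗ S = id)
    (hJ : J.IsSymmetric) {z : E} {c : 𝕜} (heig : S (J z) = c • z) (hSz : S z = conj c • J z)
    (hc : c ^ 2 ≠ 1) : ⟪z, J z⟫_𝕜 = 0 := by
  have key : ⟪z, J z⟫_𝕜 = c ^ 2 * ⟪z, J z⟫_𝕜 := by
    calc ⟪z, J z⟫_𝕜 = ⟪S z, S (J z)⟫_𝕜 :=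
          (hS.inner_map_map_of_comp_self_eq_id hS2 _ _).symm
      _ = c ^ 2 * ⟪J z, z⟫_𝕜 := by
        rw [hSz, heig, inner_smul_left, inner_smul_right, RCLike.conj_conj]; ring
      _ = c ^ 2 * ⟪z, J z⟫_𝕜 := by rw [hJ]
  have : (c ^ 2 - 1) * ⟪z, J z⟫_𝕜 = 0 := by linear_combination -key
  exact (mul_eq_zero.mp this).resolve_left (sub_ne_zero.mpr hc)

end InnerProduct

end LinearMap

theorem stmt3 {V : Type*} [NormedAddCommGroup V] [InnerProductSpace ℂ V]
    (S J : V →ₗ[ℂ] V)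
    (hS : S.IsSymmetric) (hS2 : S ∘ₗ S = LinearMap.id)
    (hJ : J.IsSymmetric) (hJ2 : J ∘ₗ J = LinearMap.id)
    (z : V) (hz : z ≠ 0) (lam : ℂ)
    (heig : S (J z) = lam • z) (hmod : ‖lam‖ = 1)
    (h1 : lam ≠ 1) (h2 : lam ≠ -1) :
    ⟪z, J z⟫_ℂ = 0 ∧
    (J z + lam • z ≠ 0 ∧ S (J z + lam • z) = J z + lam • z) ∧
    (J z - lam • z ≠ 0 ∧ S (J z - lam • z) = -(J z - lam • z)) := by
  have hsq : lam ^ 2 ≠ 1 := sq_ne_one_iff.mpr ⟨h1, h2⟩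
  have hconj : conj lam * lam = 1 := by rw [RCLike.conj_mul, hmod]; norm_num
  have hSz : S z = conj lam • J z :=
    LinearMap.apply_eq_smul_of_apply_apply_eq_smul hS2 heig hconj
  refine ⟨LinearMap.inner_apply_eq_zero_of_apply_apply_eq_smul hS hS2 hJ heig hSz hsq,
    ⟨fun h ↦ ?_, LinearMap.apply_add_smul_eq_self heig hSz hconj⟩,
    ⟨fun h ↦ ?_, LinearMap.apply_sub_smul_eq_neg heig hSz hconj⟩⟩
  · have hJz : J z = -lam • z := by rw [neg_smul]; exact eq_neg_of_add_eq_zero_left h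
    exact hsq (by simpa only [neg_sq] using LinearMap.sq_eq_one_of_apply_eq_smul hJ2 hz hJz)
  · exact hsq (LinearMap.sq_eq_one_of_apply_eq_smul hJ2 hz (sub_eq_zero.mp h))
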